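/- Fix constants τ_d > τ_1 > 0 and λ > 0, and let Z be a nonnegative random variable. With W(γ) = E[max{ (τ_d − τ_1)·max{log₂(1+γ), (1/2)log₂(1+γ+Z)} − λτ_d, −λτ_1 }], the function γ ↦ τ_d(log₂(1+γ) − λ) − W(γ) is monotone nondecreasing on γ ≥ 0 and tends to +∞ as γ → ∞. -/

import Mathlib

/-!
Raising `γ₁` to `γ₂` increases the V2V rate by `Δ = log₂(1+γ₂) − log₂(1+γ₁)` and the RSU-aided
rate by at most `Δ/2` (concavity of `log`), so the integrand of `W` grows by at most `(τ_d − τ_1)Δ`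
pointwise, while the direct term grows by `τ_d Δ`. Hence the difference grows by at least
`τ_1 Δ ≥ 0`, and comparing with `γ₁ = 0` it dominates `τ_1 log₂(1+γ)` up to a constant.
-/

open MeasureTheory Real Filter

/-- The integrand of `W γ`, evaluated at a relay SNR `z`. -/
noncomputable def probeReward (τd τ1 lam γ z : ℝ) : ℝ :=
  max ((τd - τ1) * max (logb 2 (1 + γ)) ((1 / 2) * logb 2 (1 + γ + z)) - lam * τd) (-(lam * τ1))

lemma logb_add_sub_logb_add_le {c a b z : ℝ} (hc : 1 < c) (ha : 0 < a) (hab : a ≤ b) (hz : 0 ≤ z) :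
    logb c (b + z) - logb c (a + z) ≤ logb c b - logb c a := by
  have hb : 0 < b := ha.trans_le hab
  have hcross : logb c ((b + z) * a) ≤ logb c ((a + z) * b) :=
    logb_le_logb_of_le hc (by positivity) (by nlinarith)
  rw [logb_mul (by positivity) ha.ne', logb_mul (by positivity) hb.ne'] at hcross
  linarith

lemma max_mul_max_sub_le_add {c k m x y x' y' d : ℝ} (hc : 0 ≤ c) (hd : 0 ≤ d)
    (hx : x' ≤ x + d) (hy : y' ≤ y + d) :
    max (c * max x' y' - k) m ≤ max (c * max x y - k) m + c * d := by
  have hmax : max x' y' ≤ max x y + d :=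
    max_le (hx.trans (by gcongr; exact le_max_left _ _))
      (hy.trans (by gcongr; exact le_max_right _ _))
  have hcd : 0 ≤ c * d := mul_nonneg hc hd
  refine max_le ?_ ?_
  · nlinarith [le_max_left (c * max x y - k) m, mul_le_mul_of_nonneg_left hmax hc]
  · linarith [le_max_right (c * max x y - k) m]

lemma probeReward_le_add {τd τ1 lam γ₁ γ₂ z : ℝ} (hτ : τ1 ≤ τd) (hγ₁ : 0 ≤ γ₁) (hγ : γ₁ ≤ γ₂)
    (hz : 0 ≤ z) :
    probeReward τd τ1 lam γ₂ z
      ≤ probeReward τd τ1 lam γ₁ z + (τd - τ1) * (logb 2 (1 + γ₂) - logb 2 (1 + γ₁)) := by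
  have hΔ : 0 ≤ logb 2 (1 + γ₂) - logb 2 (1 + γ₁) :=
    sub_nonneg.2 (logb_le_logb_of_le one_lt_two (by linarith) (by linarith))
  have hshift := logb_add_sub_logb_add_le one_lt_two (by linarith : (0 : ℝ) < 1 + γ₁)
    (by linarith : 1 + γ₁ ≤ 1 + γ₂) hz
  exact max_mul_max_sub_le_add (sub_nonneg.2 hτ) hΔ (by linarith) (by linarith)

lemma integral_probeReward_le_add {Ω : Type*} [MeasurableSpace Ω] {μ : Measure Ω}
    [IsProbabilityMeasure μ] {Z : Ω → ℝ} (hZ : ∀ ω, 0 ≤ Z ω) {τd τ1 lam γ₁ γ₂ : ℝ}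
    (hτ : τ1 ≤ τd) (hγ₁ : 0 ≤ γ₁) (hγ : γ₁ ≤ γ₂)
    (hi₁ : Integrable (fun ω => probeReward τd τ1 lam γ₁ (Z ω)) μ)
    (hi₂ : Integrable (fun ω => probeReward τd τ1 lam γ₂ (Z ω)) μ) :
    ∫ ω, probeReward τd τ1 lam γ₂ (Z ω) ∂μ
      ≤ ∫ ω, probeReward τd τ1 lam γ₁ (Z ω) ∂μ
        + (τd - τ1) * (logb 2 (1 + γ₂) - logb 2 (1 + γ₁)) := by
  calc ∫ ω, probeReward τd τ1 lam γ₂ (Z ω) ∂μ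
      ≤ ∫ ω, (probeReward τd τ1 lam γ₁ (Z ω)
          + (τd - τ1) * (logb 2 (1 + γ₂) - logb 2 (1 + γ₁))) ∂μ :=
        integral_mono hi₂ (hi₁.add (integrable_const _))
          fun ω => probeReward_le_add hτ hγ₁ hγ (hZ ω)
    _ = _ := by rw [integral_add hi₁ (integrable_const _), integral_const, probReal_univ, one_smul]

theorem direct_minus_W_monotone_tendsto_general {Ω : Type*} [MeasurableSpace Ω]
    (μ : Measure Ω) [IsProbabilityMeasure μ] (Z : Ω → ℝ) (hZ : ∀ ω, 0 ≤ Z ω)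
    (τd τ1 lam : ℝ) (hτ1 : 0 < τ1) (hτd : τ1 < τd)
    (W : ℝ → ℝ)
    (hW : ∀ γ : ℝ, W γ = ∫ ω,
        max ((τd - τ1) * max (Real.logb 2 (1 + γ))
              ((1 / 2) * Real.logb 2 (1 + γ + Z ω)) - lam * τd)
          (-(lam * τ1)) ∂μ)
    (hint : ∀ γ : ℝ, 0 ≤ γ → Integrable (fun ω =>
        max ((τd - τ1) * max (Real.logb 2 (1 + γ))
              ((1 / 2) * Real.logb 2 (1 + γ + Z ω)) - lam * τd)
          (-(lam * τ1))) μ) :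
    (∀ γ₁ γ₂ : ℝ, 0 ≤ γ₁ → γ₁ ≤ γ₂ →
        τd * (Real.logb 2 (1 + γ₁) - lam) - W γ₁
          ≤ τd * (Real.logb 2 (1 + γ₂) - lam) - W γ₂)
    ∧ Filter.Tendsto (fun γ : ℝ => τd * (Real.logb 2 (1 + γ) - lam) - W γ)
        Filter.atTop Filter.atTop := by
  set f := fun γ : ℝ => τd * (logb 2 (1 + γ) - lam) - W γ
  have hgain : ∀ γ₁ γ₂ : ℝ, 0 ≤ γ₁ → γ₁ ≤ γ₂ →
      f γ₁ + τ1 * (logb 2 (1 + γ₂) - logb 2 (1 + γ₁)) ≤ f γ₂ := fun γ₁ γ₂ hγ₁ hγ => by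
    have := integral_probeReward_le_add hZ hτd.le hγ₁ hγ (hint γ₁ hγ₁) (hint γ₂ (hγ₁.trans hγ))
    simp only [f, hW]
    unfold probeReward at this
    linarith
  refine ⟨fun γ₁ γ₂ hγ₁ hγ => ?_, ?_⟩
  · have hΔ : 0 ≤ logb 2 (1 + γ₂) - logb 2 (1 + γ₁) :=
      sub_nonneg.2 (logb_le_logb_of_le one_lt_two (by linarith) (by linarith))
    nlinarith [hgain γ₁ γ₂ hγ₁ hγ]
  · have hlog : Tendsto (fun γ : ℝ => f 0 + τ1 * logb 2 (1 + γ)) atTop atTop :=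
      tendsto_atTop_add_const_left _ _ <| (tendsto_logb_atTop one_lt_two).comp
        (tendsto_atTop_add_const_left _ 1 tendsto_id) |>.const_mul_atTop hτ1
    refine tendsto_atTop_mono' _ ?_ hlog
    filter_upwards [eventually_ge_atTop 0] with γ hγ
    simpa using hgain 0 γ le_rfl hγ

/-- With `τ_d > τ_1 > 0`, `λ > 0`, `Z` a nonnegative random variable and
`W(γ) = E[max{(τ_d − τ_1)·max{log₂(1+γ), (1/2)log₂(1+γ+Z)} − λτ_d, −λτ_1}]`,
the function `γ ↦ τ_d(log₂(1+γ) − λ) − W(γ)` is monotone nondecreasing on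
`γ ≥ 0` and tends to `+∞` as `γ → ∞`. -/
theorem direct_minus_W_monotone_tendsto {Ω : Type*} [MeasurableSpace Ω]
    (μ : Measure Ω) [IsProbabilityMeasure μ] (Z : Ω → ℝ) (hZ : ∀ ω, 0 ≤ Z ω)
    (τd τ1 lam : ℝ) (hτ1 : 0 < τ1) (hτd : τ1 < τd) (hlam : 0 < lam)
    (W : ℝ → ℝ)
    (hW : ∀ γ : ℝ, W γ = ∫ ω,
        max ((τd - τ1) * max (Real.logb 2 (1 + γ))
              ((1 / 2) * Real.logb 2 (1 + γ + Z ω)) - lam * τd)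
          (-(lam * τ1)) ∂μ)
    (hint : ∀ γ : ℝ, 0 ≤ γ → Integrable (fun ω =>
        max ((τd - τ1) * max (Real.logb 2 (1 + γ))
              ((1 / 2) * Real.logb 2 (1 + γ + Z ω)) - lam * τd)
          (-(lam * τ1))) μ) :
    (∀ γ₁ γ₂ : ℝ, 0 ≤ γ₁ → γ₁ ≤ γ₂ →
        τd * (Real.logb 2 (1 + γ₁) - lam) - W γ₁
          ≤ τd * (Real.logb 2 (1 + γ₂) - lam) - W γ₂)
    ∧ Filter.Tendsto (fun γ : ℝ => τd * (Real.logb 2 (1 + γ) - lam) - W γ)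
        Filter.atTop Filter.atTop :=
  direct_minus_W_monotone_tendsto_general μ Z hZ τd τ1 lam hτ1 hτd W hW hint
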